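/- Let F be a free group with basis {g_j | j ∈ J}, let s, x, and N be such that N ⊴ F, S is a Schreier transversal for N, s ∈ S, x = g_q for some q ∈ J, and set w = s·x·(\overline{sx})⁻¹. Then D_q(w) ≡ D_q(s)·s⁻¹ + (\overline{sx})⁻¹ − D_q(\overline{sx})·(\overline{sx})⁻¹ modulo ℤ[F]·(N−1) + d·ℤ[F] for any integer d; and if instead x = g_p with p ≠ q, then D_q(w) ≡ D_q(s)·s⁻¹ − D_q(\overline{sx})·(\overline{sx})⁻¹ modulo the same ideal. -/

import Mathlib

open scoped Classical

/-- The augmentation map `ℤ[F] → ℤ` induced by the trivial homomorphism `F → 1`. -/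
noncomputable def aug (J : Type) : MonoidAlgebra ℤ (FreeGroup J) →ₐ[ℤ] ℤ :=
  MonoidAlgebra.lift ℤ ℤ (FreeGroup J) 1

/-- `D` is the Fox derivative of `ℤ[F]` with respect to the generator `g_k`:
it is ℤ-linear, satisfies `D(uv) = D(u)v + ε(u)D(v)`, and sends `g_j` to `δ_{kj}`. -/
def IsFoxDerivative {J : Type} (k : J)
    (D : MonoidAlgebra ℤ (FreeGroup J) →ₗ[ℤ] MonoidAlgebra ℤ (FreeGroup J)) : Prop :=
  (∀ u v : MonoidAlgebra ℤ (FreeGroup J), D (u * v) = D u * v + (aug J u) • D v) ∧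
  (∀ j : J, D (MonoidAlgebra.of ℤ (FreeGroup J) (FreeGroup.of j)) = if k = j then 1 else 0)

/-- The ideal `ℤ[F]·(N−1)` of `ℤ[F]` generated by the elements `n − 1`, `n ∈ N`. -/
noncomputable def NIdeal {J : Type} (N : Subgroup (FreeGroup J)) :
    Submodule ℤ (MonoidAlgebra ℤ (FreeGroup J)) :=
  Submodule.span ℤ {a | ∃ u : MonoidAlgebra ℤ (FreeGroup J), ∃ n ∈ N,
    a = u * (MonoidAlgebra.of ℤ (FreeGroup J) n - 1)}

/-- The ideal `d·ℤ[F]` of multiples of the integer `d`. -/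
noncomputable def dIdeal {J : Type} (d : ℤ) : Submodule ℤ (MonoidAlgebra ℤ (FreeGroup J)) :=
  Submodule.span ℤ {a | ∃ u : MonoidAlgebra ℤ (FreeGroup J), a = d • u}

/-- `S` is a Schreier transversal for `N` in the free group. -/
def IsSchreierTransversal {α : Type} [DecidableEq α] (N : Subgroup (FreeGroup α))
    (S : Set (FreeGroup α)) : Prop :=
  (∀ f : FreeGroup α, ∃! s, s ∈ S ∧ s * f⁻¹ ∈ N) ∧
  (∀ s ∈ S, ∀ t : FreeGroup α, t.toWord <+: s.toWord → t ∈ S)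

/-
A Fox derivative satisfies `D(uv⁻¹) = (D u - D v)·v⁻¹` on group elements, so
`D(s x t⁻¹) = D(s)·x t⁻¹ + D(x)·t⁻¹ - D(t)·t⁻¹`. Since `w = s x t⁻¹ ∈ N`, the first term
`D(s)·s⁻¹·w` agrees with `D(s)·s⁻¹` modulo `ℤ[F]·(N−1)`, and `D(x) = δ_{qp}` for `x = g_p`.
-/

section Fox

variable {J : Type}

local notation "ι" => MonoidAlgebra.of ℤ (FreeGroup J)

theorem aug_of (f : FreeGroup J) : aug J (ι f) = 1 := by
  simp [aug]

theorem mul_of_sub_mul_of_mem_NIdeal {N : Subgroup (FreeGroup J)}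
    (u : MonoidAlgebra ℤ (FreeGroup J)) {a b : FreeGroup J} (hab : a⁻¹ * b ∈ N) :
    u * ι b - u * ι a ∈ NIdeal N := by
  refine Submodule.subset_span ⟨u * ι a, a⁻¹ * b, hab, ?_⟩
  rw [mul_sub, mul_assoc, ← map_mul, mul_inv_cancel_left, mul_one]

namespace IsFoxDerivative

variable {k : J} {D : MonoidAlgebra ℤ (FreeGroup J) →ₗ[ℤ] MonoidAlgebra ℤ (FreeGroup J)}

theorem map_of_mul (hD : IsFoxDerivative k D) (f g : FreeGroup J) :
    D (ι (f * g)) = D (ι f) * ι g + D (ι g) := by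
  rw [map_mul, hD.1, aug_of, one_smul]

theorem map_one (hD : IsFoxDerivative k D) : D 1 = 0 := by
  have h := hD.map_of_mul 1 1
  rw [mul_one, MonoidHom.map_one, mul_one] at h
  exact left_eq_add.mp h

theorem map_of_inv (hD : IsFoxDerivative k D) (f : FreeGroup J) :
    D (ι f⁻¹) = -(D (ι f) * ι f⁻¹) := by
  have h := hD.map_of_mul f f⁻¹
  rw [mul_inv_cancel, MonoidHom.map_one, hD.map_one] at h
  exact eq_neg_of_add_eq_zero_right h.symm

theorem map_of_mul_mul_inv (hD : IsFoxDerivative k D) (s x t : FreeGroup J) :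
    D (ι (s * x * t⁻¹)) = D (ι s) * ι (x * t⁻¹) + D (ι x) * ι t⁻¹ - D (ι t) * ι t⁻¹ := by
  rw [hD.map_of_mul, hD.map_of_mul, hD.map_of_inv, map_mul]
  noncomm_ring

theorem map_of_mul_mul_inv_sub_mem_NIdeal (hD : IsFoxDerivative k D)
    {N : Subgroup (FreeGroup J)} {s x t : FreeGroup J} (hw : s * x * t⁻¹ ∈ N) :
    D (ι (s * x * t⁻¹)) - (D (ι s) * ι s⁻¹ + D (ι x) * ι t⁻¹ - D (ι t) * ι t⁻¹) ∈
      NIdeal N := by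
  have h := mul_of_sub_mul_of_mem_NIdeal (D (ι s)) (a := s⁻¹) (b := x * t⁻¹)
    (by rwa [inv_inv, ← mul_assoc])
  rw [hD.map_of_mul_mul_inv]
  convert h using 1
  abel

end IsFoxDerivative

end Fox

theorem fox_derivative_schreier_generator_general {α : Type}
    (N : Subgroup (FreeGroup α)) (S : Set (FreeGroup α))
    (bar : FreeGroup α → FreeGroup α) (hbar : ∀ f, bar f ∈ S ∧ bar f * f⁻¹ ∈ N)
    (q : α) (D : MonoidAlgebra ℤ (FreeGroup α) →ₗ[ℤ] MonoidAlgebra ℤ (FreeGroup α))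
    (hD : IsFoxDerivative q D) (s : FreeGroup α) (d : ℤ) :
    (D (MonoidAlgebra.of ℤ (FreeGroup α)
          (s * FreeGroup.of q * (bar (s * FreeGroup.of q))⁻¹)) -
        (D (MonoidAlgebra.of ℤ (FreeGroup α) s) * MonoidAlgebra.of ℤ (FreeGroup α) s⁻¹ +
          MonoidAlgebra.of ℤ (FreeGroup α) (bar (s * FreeGroup.of q))⁻¹ -
          D (MonoidAlgebra.of ℤ (FreeGroup α) (bar (s * FreeGroup.of q))) *
            MonoidAlgebra.of ℤ (FreeGroup α) (bar (s * FreeGroup.of q))⁻¹) ∈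
        NIdeal N ⊔ dIdeal d) ∧
    ∀ p : α, p ≠ q →
      (D (MonoidAlgebra.of ℤ (FreeGroup α)
            (s * FreeGroup.of p * (bar (s * FreeGroup.of p))⁻¹)) -
          (D (MonoidAlgebra.of ℤ (FreeGroup α) s) * MonoidAlgebra.of ℤ (FreeGroup α) s⁻¹ -
            D (MonoidAlgebra.of ℤ (FreeGroup α) (bar (s * FreeGroup.of p))) *
              MonoidAlgebra.of ℤ (FreeGroup α) (bar (s * FreeGroup.of p))⁻¹) ∈
          NIdeal N ⊔ dIdeal d) := by
  have hw : ∀ x, s * x * (bar (s * x))⁻¹ ∈ N := fun x => by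
    simpa only [mul_inv_rev, inv_inv, mul_assoc] using N.inv_mem (hbar (s * x)).2
  have key := fun x => Submodule.mem_sup_left (T := dIdeal d)
    (hD.map_of_mul_mul_inv_sub_mem_NIdeal (hw x))
  refine ⟨?_, fun p hpq => ?_⟩
  · simpa only [hD.2 q, ↓reduceIte, one_mul] using key (FreeGroup.of q)
  · simpa only [hD.2 p, hpq.symm, ↓reduceIte, zero_mul, add_zero] using key (FreeGroup.of p)

/-- Congruences for the Fox derivative of a Schreier generator `w = s·x·(overline{sx})⁻¹`
modulo `ℤ[F]·(N−1) + d·ℤ[F]`: if `x = g_q` then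
`D_q(w) ≡ D_q(s)s⁻¹ + (overline{sx})⁻¹ − D_q(overline{sx})(overline{sx})⁻¹`, and if
`x = g_p` with `p ≠ q` then `D_q(w) ≡ D_q(s)s⁻¹ − D_q(overline{sx})(overline{sx})⁻¹`. -/
theorem fox_derivative_schreier_generator {α : Type} [DecidableEq α]
    (N : Subgroup (FreeGroup α)) (hN : N.Normal) (S : Set (FreeGroup α))
    (hS : IsSchreierTransversal N S)
    (bar : FreeGroup α → FreeGroup α) (hbar : ∀ f, bar f ∈ S ∧ bar f * f⁻¹ ∈ N)
    (q : α) (D : MonoidAlgebra ℤ (FreeGroup α) →ₗ[ℤ] MonoidAlgebra ℤ (FreeGroup α))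
    (hD : IsFoxDerivative q D) (s : FreeGroup α) (hs : s ∈ S) (d : ℤ) :
    (D (MonoidAlgebra.of ℤ (FreeGroup α)
          (s * FreeGroup.of q * (bar (s * FreeGroup.of q))⁻¹)) -
        (D (MonoidAlgebra.of ℤ (FreeGroup α) s) * MonoidAlgebra.of ℤ (FreeGroup α) s⁻¹ +
          MonoidAlgebra.of ℤ (FreeGroup α) (bar (s * FreeGroup.of q))⁻¹ -
          D (MonoidAlgebra.of ℤ (FreeGroup α) (bar (s * FreeGroup.of q))) *
            MonoidAlgebra.of ℤ (FreeGroup α) (bar (s * FreeGroup.of q))⁻¹) ∈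
        NIdeal N ⊔ dIdeal d) ∧
    ∀ p : α, p ≠ q →
      (D (MonoidAlgebra.of ℤ (FreeGroup α)
            (s * FreeGroup.of p * (bar (s * FreeGroup.of p))⁻¹)) -
          (D (MonoidAlgebra.of ℤ (FreeGroup α) s) * MonoidAlgebra.of ℤ (FreeGroup α) s⁻¹ -
            D (MonoidAlgebra.of ℤ (FreeGroup α) (bar (s * FreeGroup.of p))) *
              MonoidAlgebra.of ℤ (FreeGroup α) (bar (s * FreeGroup.of p))⁻¹) ∈
          NIdeal N ⊔ dIdeal d) :=
  fox_derivative_schreier_generator_general N S bar hbar q D hD s d
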